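/- Let λ be a regular uncountable cardinal, ⟨θ_ε : ε < λ⟩ a sequence of infinite cardinals below λ, and F : ^λ2 → ∏_{ε<λ} θ_ε the block-coding map. If ∏_{ε<λ} θ_ε (with the <λ-box topology) is the union of a family ⟨U_i : i < κ⟩ of nowhere dense sets, then ^λ2 (with the <λ-box topology) is the union of the κ nowhere dense sets ⟨F^{-1}(U_i) : i < κ⟩. -/

import Mathlib

/-!
Write `s(ε)` for the start of block `ε`. The value `F η ε` depends only on block `ε` of `η`,
which lies below `s(ε + 1) < λ` (regularity of `λ`), so `F` is continuous for the `<λ`-box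
topologies. Conversely, given `η` and a point `ξ` agreeing with `F η` below `γ`, keep `η`
below `s(γ) ≥ γ` and write `ξ` into the later blocks, setting only bit `ξ ε - 1` of block `ε`
when `ξ ε ≠ 0`: this is a point of the cylinder of `η` of length `γ` mapped to `ξ`. Hence `F`
is also open, and preimages of nowhere dense sets under continuous open maps are nowhere dense.
-/

open Cardinal Set

/-- The type of ordinals below `o`, serving as the domain `λ` (for `o = λ.ord`). -/
abbrev Blw (o : Ordinal.{0}) := {α : Ordinal.{0} // α < o}

/-- The space `^λ2` of functions from `λ` to `2` (for `o = λ.ord`). -/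
abbrev CSp (o : Ordinal.{0}) := Blw o → Bool

/-- The cylinder `[ν] = {η ∈ ^λ2 : ν ⊴ η}` determined by `ν : β → 2`, `β < o`. -/
def cylC (o β : Ordinal.{0}) (ν : Blw β → Bool) : Set (CSp o) :=
  {η | ∀ (α : Ordinal.{0}) (hβ : α < β) (ho : α < o), η ⟨α, ho⟩ = ν ⟨α, hβ⟩}

/-- The `<λ`-box topology on `^λ2`: generated by the cylinders `[ν]`, `ν : β → 2`,
`β < o` (its open sets are exactly the unions of such cylinders). -/
def boxC (o : Ordinal.{0}) : TopologicalSpace (CSp o) :=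
  TopologicalSpace.generateFrom
    {S | ∃ β : Ordinal.{0}, β < o ∧ ∃ ν : Blw β → Bool, S = cylC o β ν}

/-- The product `∏_{ζ<λ} θ_ζ` (for `o = λ.ord`), as the set of functions
`η : λ → Ord` with `η ζ < θ ζ` for all `ζ < λ`. -/
def PSp (o : Ordinal.{0}) (θ : Blw o → Cardinal.{0}) : Type 1 :=
  {η : Blw o → Ordinal.{0} // ∀ ζ, η ζ < (θ ζ).ord}

/-- The cylinder `[ν] = {η ∈ ∏_{ζ<λ} θ_ζ : ν ⊴ η}` determined by
`ν : ∏_{ζ<β} θ_ζ`, `β < o`. -/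
def cylP (o : Ordinal.{0}) (θ : Blw o → Cardinal.{0}) (β : Ordinal.{0})
    (ν : Blw β → Ordinal.{0}) : Set (PSp o θ) :=
  {η | ∀ (α : Ordinal.{0}) (hβ : α < β) (ho : α < o), η.1 ⟨α, ho⟩ = ν ⟨α, hβ⟩}

/-- The `<λ`-box topology on `∏_{ζ<λ} θ_ζ`: generated by the cylinders `[ν]`,
`ν ∈ ∏_{ζ<β} θ_ζ`, `β < o` (its open sets are exactly the unions of such
cylinders). -/
def boxP (o : Ordinal.{0}) (θ : Blw o → Cardinal.{0}) : TopologicalSpace (PSp o θ) :=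
  TopologicalSpace.generateFrom
    {S | ∃ β : Ordinal.{0}, β < o ∧ ∃ ν : Blw β → Ordinal.{0},
      (∀ (α : Ordinal.{0}) (hβ : α < β) (ho : α < o), ν ⟨α, hβ⟩ < (θ ⟨α, ho⟩).ord) ∧
      S = cylP o θ β ν}
/-- `blockSum t ε = Σ_{ζ<ε} t ζ` (ordinal sum): `0` at `0`, `blockSum t δ + t δ`
at `δ+1`, and the supremum at limits. -/
noncomputable def blockSum (t : Ordinal.{0} → Ordinal.{0}) (ε : Ordinal.{0}) : Ordinal.{0} :=
  Ordinal.limitRecOn ε 0 (fun δ ih => ih + t δ)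
    (fun δ _ ih => ⨆ β : Set.Iio δ, ih β.1 β.2)

/-- `sFn lam θ ε = s(ε) = Σ_{ζ<ε} θ_ζ` (ordinal sum). -/
noncomputable def sFn (lam : Cardinal.{0}) (θ : Blw lam.ord → Cardinal.{0}) :
    Ordinal.{0} → Ordinal.{0} :=
  blockSum (fun ζ => if h : ζ < lam.ord then (θ ⟨ζ, h⟩).ord else 0)

/-- `F : ^λ2 → ∏_{ε<λ} θ_ε` is the block-coding map: `F(η)(ε) = 0` if
`η(s(ε)+i) = 0` for all `i < θ_ε`, and `F(η)(ε) = 1+i` for the least `i < θ_ε`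
with `η(s(ε)+i) = 1` otherwise. -/
def FSpec (lam : Cardinal.{0}) (θ : Blw lam.ord → Cardinal.{0})
    (F : CSp lam.ord → PSp lam.ord θ) : Prop :=
  ∀ (η : CSp lam.ord) (ε : Blw lam.ord),
    ((∀ i < (θ ε).ord, ∀ h : sFn lam θ ε.1 + i < lam.ord,
        η ⟨sFn lam θ ε.1 + i, h⟩ = false) → (F η).1 ε = 0) ∧
    (∀ i < (θ ε).ord, ∀ h : sFn lam θ ε.1 + i < lam.ord,
        η ⟨sFn lam θ ε.1 + i, h⟩ = true →
        (∀ j < i, ∀ h' : sFn lam θ ε.1 + j < lam.ord,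
          η ⟨sFn lam θ ε.1 + j, h'⟩ = false) →
        (F η).1 ε = 1 + i)

open Ordinal Topology

theorem IsNowhereDense.preimage_of_isOpenMap {X Y : Type*} [TopologicalSpace X]
    [TopologicalSpace Y] {f : X → Y} (hfo : IsOpenMap f) (hfc : Continuous f) {s : Set Y}
    (hs : IsNowhereDense s) : IsNowhereDense (f ⁻¹' s) := by
  rw [IsNowhereDense, ← hfo.preimage_closure_eq_closure_preimage hfc,
    ← hfo.preimage_interior_eq_interior_preimage hfc, hs, preimage_empty]

section BlockSum

variable (t : Ordinal.{0} → Ordinal.{0})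

theorem blockSum_zero : blockSum t 0 = 0 := by
  rw [blockSum, limitRecOn_zero]

theorem blockSum_succ (δ : Ordinal.{0}) : blockSum t (δ + 1) = blockSum t δ + t δ := by
  rw [blockSum, limitRecOn_add_one]; rfl

theorem blockSum_limit {δ : Ordinal.{0}} (h : Order.IsSuccLimit δ) :
    blockSum t δ = ⨆ β : Iio δ, blockSum t β.1 := by
  rw [blockSum, limitRecOn_limit _ _ _ _ h]; rfl

theorem blockSum_mono : Monotone (blockSum t) := by
  intro ε ε' h
  induction ε' using limitRecOn with
  | zero => rw [nonpos_iff_eq_zero.mp h]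
  | add_one δ ih =>
    rcases h.lt_or_eq with h | rfl
    · rw [blockSum_succ]
      exact (ih (Order.lt_add_one_iff.mp h)).trans le_self_add
    · rfl
  | limit δ hδ ih =>
    rcases h.lt_or_eq with h | rfl
    · rw [blockSum_limit t hδ]
      exact le_ciSup Ordinal.bddAbove_of_small (⟨ε, h⟩ : Iio δ)
    · rfl

theorem le_blockSum {ε : Ordinal.{0}} (ht : ∀ ζ < ε, t ζ ≠ 0) : ε ≤ blockSum t ε := by
  induction ε using limitRecOn with
  | zero => exact bot_le
  | add_one δ ih =>
    rw [blockSum_succ]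
    calc δ + 1 ≤ blockSum t δ + 1 :=
          add_le_add_left (ih fun ζ hζ => ht ζ (hζ.trans (lt_add_one δ))) 1
      _ ≤ blockSum t δ + t δ :=
          add_le_add_right (Order.one_le_iff_ne_zero.mpr (ht δ (lt_add_one δ))) _
  | limit δ hδ ih =>
    rw [blockSum_limit t hδ]
    refine le_of_forall_lt fun c hc => ?_
    have hc1 : c + 1 < δ := hδ.succ_lt hc
    calc c < c + 1 := lt_add_one c
      _ ≤ blockSum t (c + 1) := ih (c + 1) hc1 fun ζ hζ => ht ζ (hζ.trans hc1)
      _ ≤ ⨆ β : Iio δ, blockSum t β.1 := le_ciSup Ordinal.bddAbove_of_small (⟨c + 1, hc1⟩ : Iio δ)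

theorem blockSum_add_lt_of_lt {ε ε' i : Ordinal.{0}} (hi : i < t ε) (h : ε < ε') :
    blockSum t ε + i < blockSum t ε' :=
  calc blockSum t ε + i < blockSum t (ε + 1) := by
        rw [blockSum_succ]; exact add_lt_add_right hi _
    _ ≤ blockSum t ε' := blockSum_mono t (Order.add_one_le_of_lt h)

theorem blockSum_add_inj {ε ε' i j : Ordinal.{0}} (hi : i < t ε) (hj : j < t ε')
    (h : blockSum t ε + i = blockSum t ε' + j) : ε = ε' ∧ i = j := by
  have hε : ε = ε' := by
    by_contra hne
    rcases lt_or_gt_of_ne hne with hlt | hlt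
    · exact (h ▸ blockSum_add_lt_of_lt t hi hlt).not_ge le_self_add
    · exact (h ▸ blockSum_add_lt_of_lt t hj hlt).not_ge le_self_add
  subst hε
  exact ⟨rfl, (add_right_inj _).mp h⟩

theorem blockSum_lt_ord {c : Cardinal.{0}} (hc : c.IsRegular) (ht : ∀ ζ < c.ord, t ζ < c.ord)
    {ε : Ordinal.{0}} (hε : ε < c.ord) : blockSum t ε < c.ord := by
  induction ε using limitRecOn with
  | zero => rwa [blockSum_zero]
  | add_one δ ih =>
    have hδ : δ < c.ord := (lt_add_one δ).trans hε
    rw [blockSum_succ]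
    exact isPrincipal_add_ord hc.aleph0_le (ih hδ) (ht δ hδ)
  | limit δ hδ ih =>
    rw [blockSum_limit t hδ]
    refine lift_iSup_lt_of_lt_cof ?_ fun β => ih β.1 β.2 (β.2.trans hε)
    rw [Cardinal.mk_Iio_ordinal, Cardinal.lift_lift, ← lift_cof, hc.cof_ord,
      Cardinal.lift_lt, ← Cardinal.lt_ord]
    exact hε

end BlockSum

section BoxTopology

variable {o : Ordinal.{0}}

def restC {γ : Ordinal.{0}} (hγ : γ ≤ o) (η : CSp o) : Blw γ → Bool :=
  fun a => η ⟨a.1, a.2.trans_le hγ⟩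

theorem mem_cylC_restC {γ : Ordinal.{0}} (hγ : γ ≤ o) (η : CSp o) :
    η ∈ cylC o γ (restC hγ η) :=
  fun _ _ _ => rfl

theorem cylC_restC_subset {β γ : Ordinal.{0}} (hγ : γ ≤ o) (hβγ : β ≤ γ)
    {ν : Blw β → Bool} {η : CSp o} (hη : η ∈ cylC o β ν) :
    cylC o γ (restC hγ η) ⊆ cylC o β ν :=
  fun _ hη' α hαβ hα => (hη' α (hαβ.trans_le hβγ) hα).trans (hη α hαβ hα)

theorem isOpen_cylC {β : Ordinal.{0}} (hβ : β < o) (ν : Blw β → Bool) :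
    IsOpen[boxC o] (cylC o β ν) :=
  TopologicalSpace.isOpen_generateFrom_of_mem ⟨β, hβ, ν, rfl⟩

theorem isTopologicalBasis_cylC (ho : 0 < o) :
    @TopologicalSpace.IsTopologicalBasis (CSp o) (boxC o)
      {S | ∃ β : Ordinal.{0}, β < o ∧ ∃ ν : Blw β → Bool, S = cylC o β ν} := by
  let := boxC o
  refine ⟨?_, ?_, rfl⟩
  · rintro _ ⟨β₁, hβ₁, ν₁, rfl⟩ _ ⟨β₂, hβ₂, ν₂, rfl⟩ η hη
    have hβ : max β₁ β₂ < o := max_lt hβ₁ hβ₂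
    exact ⟨_, ⟨_, hβ, restC hβ.le η, rfl⟩, mem_cylC_restC hβ.le η,
      subset_inter (cylC_restC_subset hβ.le (le_max_left _ _) hη.1)
        (cylC_restC_subset hβ.le (le_max_right _ _) hη.2)⟩
  · exact eq_univ_of_forall fun η => ⟨_, ⟨0, ho, restC bot_le η, rfl⟩, mem_cylC_restC bot_le η⟩

variable {θ : Blw o → Cardinal.{0}}

def restP {γ : Ordinal.{0}} (hγ : γ ≤ o) (η : PSp o θ) : Blw γ → Ordinal.{0} :=
  fun a => η.1 ⟨a.1, a.2.trans_le hγ⟩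

theorem mem_cylP_restP {γ : Ordinal.{0}} (hγ : γ ≤ o) (η : PSp o θ) :
    η ∈ cylP o θ γ (restP hγ η) :=
  fun _ _ _ => rfl

theorem isOpen_cylP_restP {γ : Ordinal.{0}} (hγ : γ < o) (η : PSp o θ) :
    IsOpen[boxP o θ] (cylP o θ γ (restP hγ.le η)) :=
  TopologicalSpace.isOpen_generateFrom_of_mem ⟨γ, hγ, _, fun _ _ _ => η.2 _, rfl⟩

end BoxTopology

section BlockCoding

variable {lam : Cardinal.{0}} {θ : Blw lam.ord → Cardinal.{0}}

theorem sFn_add_lt_sFn {ε : Blw lam.ord} {ε' i : Ordinal.{0}} (hi : i < (θ ε).ord)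
    (h : ε.1 < ε') : sFn lam θ ε.1 + i < sFn lam θ ε' :=
  blockSum_add_lt_of_lt _ (by rwa [dif_pos ε.2]) h

theorem sFn_add_inj {ε ε' : Blw lam.ord} {i j : Ordinal.{0}} (hi : i < (θ ε).ord)
    (hj : j < (θ ε').ord) (h : sFn lam θ ε.1 + i = sFn lam θ ε'.1 + j) : ε = ε' ∧ i = j := by
  obtain ⟨hε, hij⟩ := blockSum_add_inj _ (by rwa [dif_pos ε.2]) (by rwa [dif_pos ε'.2]) h
  exact ⟨Subtype.ext hε, hij⟩

theorem le_sFn (hθ : ∀ ζ, θ ζ ≠ 0) {ε : Ordinal.{0}} (hε : ε ≤ lam.ord) : ε ≤ sFn lam θ ε :=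
  le_blockSum _ fun ζ hζ => by
    rw [dif_pos (hζ.trans_le hε), Ne, Cardinal.ord_eq_zero]
    exact hθ _

theorem sFn_lt_ord (hreg : lam.IsRegular) (hθ : ∀ ζ, θ ζ < lam) {ε : Ordinal.{0}}
    (hε : ε < lam.ord) : sFn lam θ ε < lam.ord :=
  blockSum_lt_ord _ hreg (fun ζ hζ => by rw [dif_pos hζ]; exact Cardinal.ord_lt_ord.mpr (hθ _)) hε

theorem sFn_add_lt_ord (hreg : lam.IsRegular) (hθ : ∀ ζ, θ ζ < lam) {ε : Blw lam.ord}
    {i : Ordinal.{0}} (hi : i < (θ ε).ord) : sFn lam θ ε.1 + i < lam.ord := by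
  have hε : ε.1 + 1 < lam.ord := by
    simpa using (Cardinal.isSuccLimit_ord hreg.aleph0_le).succ_lt ε.2
  exact (sFn_add_lt_sFn hi (lt_add_one ε.1)).trans (sFn_lt_ord hreg hθ hε)

theorem FSpec.apply_congr {F : CSp lam.ord → PSp lam.ord θ} (hF : FSpec lam θ F)
    {η η' : CSp lam.ord} {ε : Blw lam.ord}
    (h : ∀ i < (θ ε).ord, ∀ hp : sFn lam θ ε.1 + i < lam.ord, η ⟨_, hp⟩ = η' ⟨_, hp⟩) :
    (F η).1 ε = (F η').1 ε := by
  by_cases hzero : ∀ i < (θ ε).ord, ∀ hp : sFn lam θ ε.1 + i < lam.ord, η ⟨_, hp⟩ = false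
  · rw [(hF η ε).1 hzero, (hF η' ε).1 fun i hi hp => h i hi hp ▸ hzero i hi hp]
  push Not at hzero
  obtain ⟨i₀, ⟨hi₀, hp₀, htrue⟩, hmin⟩ := Ordinal.lt_wf.has_min
    {i | ∃ hi : i < (θ ε).ord, ∃ hp : sFn lam θ ε.1 + i < lam.ord, η ⟨_, hp⟩ = true}
    (by obtain ⟨i, hi, hp, hne⟩ := hzero; exact ⟨i, hi, hp, by simpa using hne⟩)
  have hleast : ∀ j < i₀, ∀ hp : sFn lam θ ε.1 + j < lam.ord, η ⟨_, hp⟩ = false :=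
    fun j hj hp => by
      by_contra hne
      exact hmin j ⟨hj.trans hi₀, hp, by simpa using hne⟩ hj
  rw [(hF η ε).2 i₀ hi₀ hp₀ htrue hleast, (hF η' ε).2 i₀ hi₀ hp₀ (h i₀ hi₀ hp₀ ▸ htrue)
    fun j hj hp => h j (hj.trans hi₀) hp ▸ hleast j hj hp]

open Classical in
noncomputable def blockEncode (lam : Cardinal.{0}) (θ : Blw lam.ord → Cardinal.{0})
    (γ : Ordinal.{0}) (η : CSp lam.ord) (ξ : PSp lam.ord θ) : CSp lam.ord := fun a =>
  if a.1 < sFn lam θ γ then η a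
  else decide (∃ ε : Blw lam.ord, ξ.1 ε ≠ 0 ∧ a.1 = sFn lam θ ε.1 + (ξ.1 ε - 1))

theorem blockEncode_of_lt {γ : Ordinal.{0}} {η : CSp lam.ord} {ξ : PSp lam.ord θ}
    {a : Blw lam.ord} (h : a.1 < sFn lam θ γ) : blockEncode lam θ γ η ξ a = η a :=
  if_pos h

theorem blockEncode_eq_true_iff {γ : Ordinal.{0}} {η : CSp lam.ord} {ξ : PSp lam.ord θ}
    {ε : Blw lam.ord} (hγ : γ ≤ ε.1) {i : Ordinal.{0}} (hi : i < (θ ε).ord)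
    (hp : sFn lam θ ε.1 + i < lam.ord) :
    blockEncode lam θ γ η ξ ⟨_, hp⟩ = true ↔ ξ.1 ε ≠ 0 ∧ i = ξ.1 ε - 1 := by
  have hge : ¬ sFn lam θ ε.1 + i < sFn lam θ γ :=
    not_lt.mpr ((blockSum_mono _ hγ).trans le_self_add)
  simp only [blockEncode, if_neg hge, decide_eq_true_eq]
  constructor
  · rintro ⟨ε', hne, heq⟩
    obtain ⟨rfl, rfl⟩ := sFn_add_inj hi ((sub_le_self _ _).trans_lt (ξ.2 ε')) heq
    exact ⟨hne, rfl⟩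
  · rintro ⟨hne, rfl⟩
    exact ⟨ε, hne, rfl⟩

theorem FSpec.apply_blockEncode (hreg : lam.IsRegular) (hθ : ∀ ζ, θ ζ < lam)
    {F : CSp lam.ord → PSp lam.ord θ} (hF : FSpec lam θ F) {γ : Ordinal.{0}}
    {η : CSp lam.ord} {ξ : PSp lam.ord θ} (hξ : ∀ ε : Blw lam.ord, ε.1 < γ → ξ.1 ε = (F η).1 ε) :
    F (blockEncode lam θ γ η ξ) = ξ := by
  refine Subtype.ext (funext fun ε => ?_)
  rcases lt_or_ge ε.1 γ with hεγ | hγε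
  · rw [hξ ε hεγ]
    exact hF.apply_congr fun i hi hp => blockEncode_of_lt (sFn_add_lt_sFn hi hεγ)
  by_cases h0 : ξ.1 ε = 0
  · rw [h0]
    refine (hF _ ε).1 fun i hi hp => ?_
    rw [← Bool.not_eq_true, blockEncode_eq_true_iff hγε hi hp]
    exact fun h => h.1 h0
  have hi₀ : ξ.1 ε - 1 < (θ ε).ord := (sub_le_self _ _).trans_lt (ξ.2 ε)
  have hleast : ∀ j < ξ.1 ε - 1, ∀ hp : sFn lam θ ε.1 + j < lam.ord,
      blockEncode lam θ γ η ξ ⟨_, hp⟩ = false := fun j hj hp => by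
    rw [← Bool.not_eq_true, blockEncode_eq_true_iff hγε (hj.trans hi₀) hp]
    exact fun h => hj.ne h.2
  rw [(hF _ ε).2 _ hi₀ (sFn_add_lt_ord hreg hθ hi₀)
    ((blockEncode_eq_true_iff hγε hi₀ _).2 ⟨h0, rfl⟩) hleast,
    Ordinal.add_sub_cancel_of_le (Order.one_le_iff_ne_zero.mpr h0)]

theorem FSpec.continuous (hreg : lam.IsRegular) (hθ : ∀ ζ, θ ζ < lam)
    {F : CSp lam.ord → PSp lam.ord θ} (hF : FSpec lam θ F) :
    Continuous[boxC lam.ord, boxP lam.ord θ] F := by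
  let := boxC lam.ord
  refine continuous_generateFrom_iff.2 ?_
  rintro _ ⟨β, hβ, ν, -, rfl⟩
  have hsβ : sFn lam θ β < lam.ord := sFn_lt_ord hreg hθ hβ
  refine isOpen_iff_forall_mem_open.2 fun η hη =>
    ⟨_, fun η' hη' α hαβ hα => ?_, isOpen_cylC hsβ _, mem_cylC_restC hsβ.le η⟩
  rw [← hη α hαβ hα]
  exact hF.apply_congr fun i hi hp => hη' _ (sFn_add_lt_sFn hi hαβ) hp

theorem FSpec.isOpenMap (hreg : lam.IsRegular) (hθ₀ : ∀ ζ, θ ζ ≠ 0) (hθ : ∀ ζ, θ ζ < lam)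
    {F : CSp lam.ord → PSp lam.ord θ} (hF : FSpec lam θ F) :
    @IsOpenMap _ _ (boxC lam.ord) (boxP lam.ord θ) F := by
  let := boxC lam.ord
  let := boxP lam.ord θ
  refine (isTopologicalBasis_cylC hreg.ord_pos).isOpenMap_iff.2 ?_
  rintro _ ⟨γ, hγ, ρ, rfl⟩
  refine isOpen_iff_forall_mem_open.2 ?_
  rintro _ ⟨η, hη, rfl⟩
  refine ⟨cylP lam.ord θ γ (restP hγ.le (F η)),
    fun ξ hξ => ⟨blockEncode lam θ γ η ξ, fun α hαγ hα => ?_,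
      hF.apply_blockEncode hreg hθ fun ε hε => hξ ε.1 hε ε.2⟩,
    isOpen_cylP_restP hγ (F η), mem_cylP_restP hγ.le (F η)⟩
  rw [blockEncode_of_lt (hαγ.trans_le (le_sFn hθ₀ hγ.le))]
  exact hη α hαγ hα

end BlockCoding

theorem blockCoding_cover_nowhereDense_general (lam κ : Cardinal.{0}) (hreg : lam.IsRegular)
    (θ : Blw lam.ord → Cardinal.{0})
    (hθ : ∀ ζ, ℵ₀ ≤ θ ζ ∧ θ ζ < lam)
    (F : CSp lam.ord → PSp lam.ord θ) (hF : FSpec lam θ F)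
    (U : Blw κ.ord → Set (PSp lam.ord θ))
    (hU : ∀ i, @IsNowhereDense _ (boxP lam.ord θ) (U i))
    (hcover : (⋃ i, U i) = Set.univ) :
    (∀ i, @IsNowhereDense _ (boxC lam.ord) (F ⁻¹' U i)) ∧
    (⋃ i, F ⁻¹' U i) = Set.univ := by
  let := boxC lam.ord
  let := boxP lam.ord θ
  have hθ₀ : ∀ ζ, θ ζ ≠ 0 := fun ζ => (aleph0_pos.trans_le (hθ ζ).1).ne'
  have hθlt : ∀ ζ, θ ζ < lam := fun ζ => (hθ ζ).2
  have hcont : Continuous F := hF.continuous hreg hθlt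
  have hopen : IsOpenMap F := hF.isOpenMap hreg hθ₀ hθlt
  exact ⟨fun i => (hU i).preimage_of_isOpenMap hopen hcont,
    by rw [← preimage_iUnion, hcover, preimage_univ]⟩

/-- for `λ` regular uncountable, `⟨θ_ε : ε < λ⟩` infinite cardinals
below `λ`, and `F` the block-coding map, if `∏_{ε<λ} θ_ε` is the union of a
family `⟨U_i : i < κ⟩` of nowhere dense sets, then `^λ2` is the union of the `κ`
nowhere dense sets `⟨F⁻¹(U_i) : i < κ⟩` (`<λ`-box topologies). -/
theorem blockCoding_cover_nowhereDense (lam κ : Cardinal.{0}) (hreg : lam.IsRegular)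
    (hunc : ℵ₀ < lam) (θ : Blw lam.ord → Cardinal.{0})
    (hθ : ∀ ζ, ℵ₀ ≤ θ ζ ∧ θ ζ < lam)
    (F : CSp lam.ord → PSp lam.ord θ) (hF : FSpec lam θ F)
    (U : Blw κ.ord → Set (PSp lam.ord θ))
    (hU : ∀ i, @IsNowhereDense _ (boxP lam.ord θ) (U i))
    (hcover : (⋃ i, U i) = Set.univ) :
    (∀ i, @IsNowhereDense _ (boxC lam.ord) (F ⁻¹' U i)) ∧
    (⋃ i, F ⁻¹' U i) = Set.univ :=
  blockCoding_cover_nowhereDense_general lam κ hreg θ hθ F hF U hU hcover
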